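/- Let $T$ be a bounded linear operator on a Banach space, let $m \geq 0$, and set $\Delta^{m+1}_n(S) = S^n(S-I)^{m+1}$ for an operator $S$. Then for any vector $x$ in a Hilbert space on which $T$ acts (or more generally taking norms), one has the pointwise square-function domination $\left(\sum_{n=0}^{\infty} n^{2m+1} \|\Delta^{m+1}_n(T^2)x\|^2\right)^{1/2} \leq C_m \left(\sum_{n=0}^{\infty} n^{2m+1} \|\Delta^{m+1}_n(T)x\|^2\right)^{1/2}$ with constant $C_m = 2^{-(2m+1)/2} \cdot 2^{(m+1)/2} \binom{m+1}{\lfloor(m+1)/2\rfloor}^{1/2} \cdot (\sum_{k=0}^{m+1}\binom{m+1}{k})^{1/2} \leq 2^{m+1}$; in particular the left side is at most $2^{m+1}$ times the right side whenever the right side is finite. -/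

import Mathlib

open scoped ENNReal NNReal

/-- `Δ^{m+1}_n(S) x = S^n (S - I)^{m+1} x`. -/
noncomputable def deltaOp {H : Type*} [NormedAddCommGroup H] [InnerProductSpace ℂ H]
    (S : H →L[ℂ] H) (m n : ℕ) : H →L[ℂ] H :=
  S ^ n * (S - 1) ^ (m + 1)

open Polynomial Finset in
/-- The binomial identity in the polynomial ring. -/
lemma poly_binom_id (m n : ℕ) :
    ((X : ℂ[X]) ^ 2) ^ n * (X ^ 2 - 1) ^ (m + 1) =
      ∑ k ∈ Finset.range (m + 2),
        (((m + 1).choose k : ℂ)) • (X ^ (2 * n + k) * (X - 1) ^ (m + 1)) := by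
  have h1 : ((X : ℂ[X]) ^ 2 - 1) = (X + 1) * (X - 1) := by ring
  have h2 : ((X : ℂ[X]) + 1) ^ (m + 1) =
      ∑ k ∈ Finset.range (m + 2), (((m + 1).choose k : ℂ)) • (X : ℂ[X]) ^ k := by
    rw [add_pow]
    refine Finset.sum_congr rfl fun k _ => ?_
    simp [Polynomial.smul_eq_C_mul, mul_comm, Polynomial.C_eq_natCast]
  calc ((X : ℂ[X]) ^ 2) ^ n * (X ^ 2 - 1) ^ (m + 1)
      = X ^ (2 * n) * ((X + 1) ^ (m + 1) * (X - 1) ^ (m + 1)) := by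
        rw [h1, mul_pow, ← pow_mul]
    _ = ∑ k ∈ Finset.range (m + 2),
        (((m + 1).choose k : ℂ)) • (X ^ (2 * n + k) * (X - 1) ^ (m + 1)) := by
        rw [h2, Finset.sum_mul, Finset.mul_sum]
        refine Finset.sum_congr rfl fun k _ => ?_
        rw [Polynomial.smul_eq_C_mul, Polynomial.smul_eq_C_mul, pow_add]
        ring

open Polynomial in
/-- The binomial identity for operators. -/
lemma deltaOp_sq_eq {H : Type*} [NormedAddCommGroup H] [InnerProductSpace ℂ H]
    [CompleteSpace H] (T : H →L[ℂ] H) (m n : ℕ) :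
    deltaOp (T ^ 2) m n =
      ∑ k ∈ Finset.range (m + 2),
        (((m + 1).choose k : ℂ)) • deltaOp T m (2 * n + k) := by
  have h := congrArg (Polynomial.aeval T) (poly_binom_id m n)
  simpa [deltaOp, map_sum] using h

/-- Cauchy–Schwarz with weights, in `ℝ≥0`. -/
lemma nnreal_weighted_cs (s : Finset ℕ) (c a : ℕ → ℝ≥0) :
    (∑ k ∈ s, c k * a k) ^ 2 ≤ (∑ k ∈ s, c k) * ∑ k ∈ s, c k * a k ^ 2 :=
  Finset.sum_sq_le_sum_mul_sum_of_sq_eq_mul s (fun _ _ => zero_le) (fun _ _ => zero_le)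
    (fun k _ => by ring)

/-- pointwise square-function domination. For a bounded operator `T` on a
Hilbert space, `m ≥ 0` and any vector `x`, whenever the square function of `T` is
finite one has
`(∑_n n^{2m+1} ‖Δ^{m+1}_n(T²) x‖²)^{1/2} ≤ 2^{m+1} (∑_n n^{2m+1} ‖Δ^{m+1}_n(T) x‖²)^{1/2}`. -/
theorem square_function_domination {H : Type*} [NormedAddCommGroup H]
    [InnerProductSpace ℂ H] [CompleteSpace H] (T : H →L[ℂ] H) (m : ℕ) (x : H)
    (hfin : (∑' n : ℕ, (n : ℝ≥0∞) ^ (2 * m + 1) *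
        (‖deltaOp T m n x‖₊ : ℝ≥0∞) ^ 2) ^ (1 / 2 : ℝ) < ∞) :
    (∑' n : ℕ, (n : ℝ≥0∞) ^ (2 * m + 1) *
        (‖deltaOp (T ^ 2) m n x‖₊ : ℝ≥0∞) ^ 2) ^ (1 / 2 : ℝ) ≤
      2 ^ (m + 1) *
        (∑' n : ℕ, (n : ℝ≥0∞) ^ (2 * m + 1) *
          (‖deltaOp T m n x‖₊ : ℝ≥0∞) ^ 2) ^ (1 / 2 : ℝ) := by
  set a : ℕ → ℝ≥0 := fun j => ‖deltaOp T m j x‖₊ with ha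
  set b : ℕ → ℝ≥0 := fun n => ‖deltaOp (T ^ 2) m n x‖₊ with hb
  set c : ℕ → ℝ≥0 := fun k => ((m + 1).choose k : ℝ≥0) with hc
  set S1 : ℝ≥0∞ := ∑' j : ℕ, (j : ℝ≥0∞) ^ (2 * m + 1) * (a j : ℝ≥0∞) ^ 2 with hS1
  set S2 : ℝ≥0∞ := ∑' n : ℕ, (n : ℝ≥0∞) ^ (2 * m + 1) * (b n : ℝ≥0∞) ^ 2 with hS2
  -- triangle inequality
  have h_tri : ∀ n : ℕ, b n ≤ ∑ k ∈ Finset.range (m + 2), c k * a (2 * n + k) := by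
    intro n
    have h := deltaOp_sq_eq T m n
    have h2 : deltaOp (T ^ 2) m n x =
        ∑ k ∈ Finset.range (m + 2), ((m + 1).choose k : ℂ) • deltaOp T m (2 * n + k) x := by
      rw [h]; simp
    calc b n = ‖∑ k ∈ Finset.range (m + 2),
          ((m + 1).choose k : ℂ) • deltaOp T m (2 * n + k) x‖₊ := by simp only [hb]; rw [h2]
      _ ≤ ∑ k ∈ Finset.range (m + 2), ‖((m + 1).choose k : ℂ) • deltaOp T m (2 * n + k) x‖₊ :=
          nnnorm_sum_le _ _
      _ = ∑ k ∈ Finset.range (m + 2), c k * a (2 * n + k) := by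
          refine Finset.sum_congr rfl fun k _ => ?_
          rw [nnnorm_smul]
          congr 1
          simp [hc]
  -- Cauchy–Schwarz
  have hsum_c : ∑ k ∈ Finset.range (m + 2), c k = 2 ^ (m + 1) := by
    rw [hc]
    rw [← Nat.cast_sum]
    rw [Nat.sum_range_choose]
    push_cast
    ring
  have h_cs : ∀ n : ℕ, (b n : ℝ≥0) ^ 2 ≤
      2 ^ (m + 1) * ∑ k ∈ Finset.range (m + 2), c k * a (2 * n + k) ^ 2 := by
    intro n
    calc (b n) ^ 2 ≤ (∑ k ∈ Finset.range (m + 2), c k * a (2 * n + k)) ^ 2 := by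
          gcongr; exact h_tri n
      _ ≤ (∑ k ∈ Finset.range (m + 2), c k) *
            ∑ k ∈ Finset.range (m + 2), c k * a (2 * n + k) ^ 2 :=
          nnreal_weighted_cs _ _ _
      _ = 2 ^ (m + 1) * ∑ k ∈ Finset.range (m + 2), c k * a (2 * n + k) ^ 2 := by
          rw [hsum_c]
  -- pointwise ENNReal bound
  have h_pt : ∀ n : ℕ, (2 : ℝ≥0∞) ^ (2 * m + 1) * ((n : ℝ≥0∞) ^ (2 * m + 1) * (b n : ℝ≥0∞) ^ 2) ≤
      2 ^ (m + 1) * ∑ k ∈ Finset.range (m + 2),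
        (c k : ℝ≥0∞) * (((2 * n + k : ℕ) : ℝ≥0∞) ^ (2 * m + 1) * (a (2 * n + k) : ℝ≥0∞) ^ 2) := by
    intro n
    have hbn : ((b n : ℝ≥0∞)) ^ 2 ≤
        2 ^ (m + 1) * ∑ k ∈ Finset.range (m + 2), (c k : ℝ≥0∞) * (a (2 * n + k) : ℝ≥0∞) ^ 2 := by
      have := h_cs n
      calc ((b n : ℝ≥0∞)) ^ 2 = ((b n ^ 2 : ℝ≥0) : ℝ≥0∞) := by push_cast; ring
        _ ≤ ((2 ^ (m + 1) * ∑ k ∈ Finset.range (m + 2), c k * a (2 * n + k) ^ 2 : ℝ≥0) : ℝ≥0∞) :=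
            ENNReal.coe_le_coe.mpr this
        _ = 2 ^ (m + 1) * ∑ k ∈ Finset.range (m + 2),
              (c k : ℝ≥0∞) * (a (2 * n + k) : ℝ≥0∞) ^ 2 := by push_cast; ring
    calc (2 : ℝ≥0∞) ^ (2 * m + 1) * ((n : ℝ≥0∞) ^ (2 * m + 1) * (b n : ℝ≥0∞) ^ 2)
        = ((2 * n : ℕ) : ℝ≥0∞) ^ (2 * m + 1) * (b n : ℝ≥0∞) ^ 2 := by
          push_cast; rw [mul_pow]; ring
      _ ≤ ((2 * n : ℕ) : ℝ≥0∞) ^ (2 * m + 1) *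
            (2 ^ (m + 1) * ∑ k ∈ Finset.range (m + 2),
              (c k : ℝ≥0∞) * (a (2 * n + k) : ℝ≥0∞) ^ 2) := by gcongr
      _ = 2 ^ (m + 1) * ∑ k ∈ Finset.range (m + 2),
            (c k : ℝ≥0∞) * (((2 * n : ℕ) : ℝ≥0∞) ^ (2 * m + 1) * (a (2 * n + k) : ℝ≥0∞) ^ 2) := by
          simp only [Finset.mul_sum]
          exact Finset.sum_congr rfl fun k _ => by ring
      _ ≤ 2 ^ (m + 1) * ∑ k ∈ Finset.range (m + 2),
            (c k : ℝ≥0∞) * (((2 * n + k : ℕ) : ℝ≥0∞) ^ (2 * m + 1) *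
              (a (2 * n + k) : ℝ≥0∞) ^ 2) := by
          gcongr with k hk
          exact_mod_cast Nat.le_add_right _ _
  -- sum the pointwise bound
  have h_inner : ∀ k : ℕ,
      (∑' n : ℕ, ((2 * n + k : ℕ) : ℝ≥0∞) ^ (2 * m + 1) * (a (2 * n + k) : ℝ≥0∞) ^ 2) ≤ S1 := by
    intro k
    have hinj : Function.Injective (fun n : ℕ => 2 * n + k) := by
      intro p q h; dsimp only at h; omega
    exact ENNReal.tsum_comp_le_tsum_of_injective hinj
      (fun j => (j : ℝ≥0∞) ^ (2 * m + 1) * (a j : ℝ≥0∞) ^ 2)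
  have key : (2 : ℝ≥0∞) ^ (2 * m + 1) * S2 ≤ (2 : ℝ≥0∞) ^ (2 * m + 1) * (2 * S1) := by
    calc (2 : ℝ≥0∞) ^ (2 * m + 1) * S2
        = ∑' n : ℕ, (2 : ℝ≥0∞) ^ (2 * m + 1) *
            ((n : ℝ≥0∞) ^ (2 * m + 1) * (b n : ℝ≥0∞) ^ 2) := by
          rw [hS2, ENNReal.tsum_mul_left]
      _ ≤ ∑' n : ℕ, 2 ^ (m + 1) * ∑ k ∈ Finset.range (m + 2),
            (c k : ℝ≥0∞) * (((2 * n + k : ℕ) : ℝ≥0∞) ^ (2 * m + 1) *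
              (a (2 * n + k) : ℝ≥0∞) ^ 2) :=
          ENNReal.tsum_le_tsum h_pt
      _ = 2 ^ (m + 1) * ∑ k ∈ Finset.range (m + 2), (c k : ℝ≥0∞) *
            ∑' n : ℕ, ((2 * n + k : ℕ) : ℝ≥0∞) ^ (2 * m + 1) * (a (2 * n + k) : ℝ≥0∞) ^ 2 := by
          rw [ENNReal.tsum_mul_left]
          congr 1
          rw [Summable.tsum_finsetSum (fun k _ => ENNReal.summable)]
          exact Finset.sum_congr rfl fun k _ => ENNReal.tsum_mul_left
      _ ≤ 2 ^ (m + 1) * ∑ k ∈ Finset.range (m + 2), (c k : ℝ≥0∞) * S1 := by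
          gcongr with k hk
          exact h_inner k
      _ = 2 ^ (m + 1) * ((2 : ℝ≥0∞) ^ (m + 1) * S1) := by
          rw [← Finset.sum_mul]
          congr 2
          rw [← ENNReal.coe_finset_sum, hsum_c]
          push_cast
          ring
      _ = (2 : ℝ≥0∞) ^ (2 * m + 1) * (2 * S1) := by
          have hp : (2 : ℝ≥0∞) ^ (m + 1) * (2 : ℝ≥0∞) ^ (m + 1) =
              (2 : ℝ≥0∞) ^ (2 * m + 1) * 2 := by
            rw [← pow_add, ← pow_succ]; congr 1; ring
          rw [← mul_assoc, hp]; ring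
  have hS2_le : S2 ≤ 2 * S1 := by
    have h2 : (2 : ℝ≥0∞) ^ (2 * m + 1) ≠ 0 := by positivity
    have h3 : (2 : ℝ≥0∞) ^ (2 * m + 1) ≠ ∞ := by
      exact ENNReal.pow_ne_top (by norm_num)
    exact (ENNReal.mul_le_mul_iff_right h2 h3).mp key
  -- conclude with rpow
  calc S2 ^ (1 / 2 : ℝ) ≤ (2 * S1) ^ (1 / 2 : ℝ) :=
        ENNReal.rpow_le_rpow hS2_le (by norm_num)
    _ = (2 : ℝ≥0∞) ^ (1 / 2 : ℝ) * S1 ^ (1 / 2 : ℝ) :=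
        ENNReal.mul_rpow_of_nonneg _ _ (by norm_num)
    _ ≤ 2 ^ (m + 1) * S1 ^ (1 / 2 : ℝ) := by
        gcongr
        calc (2 : ℝ≥0∞) ^ (1 / 2 : ℝ) ≤ (2 : ℝ≥0∞) ^ (1 : ℝ) :=
              ENNReal.rpow_le_rpow_of_exponent_le one_le_two (by norm_num)
          _ = 2 := ENNReal.rpow_one 2
          _ ≤ 2 ^ (m + 1) := le_self_pow₀ one_le_two (by omega)
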